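/- Let V be a p-operator space with quantity ‖·‖_{2,n} on M_n(V) (infimum over factorizations v = αwβ with α^T and β full-rank ℓ_{p'}- resp. ℓ_p-polar decomposible). Then for v_1 ∈ M_n(V) and v_2 ∈ M_m(V), the direct sum satisfies ‖v_1 ⊕ v_2‖_{2,n+m} ≤ ‖v_1‖_{2,n} + ‖v_2‖_{2,m}. -/
import Mathlib


open Finset Matrix

/-- The ℓ_q norm of a finite complex sequence. -/
noncomputable def lpNorm (q : ℝ) {m : ℕ} (x : Fin m → ℂ) : ℝ :=
  (∑ i, ‖x i‖ ^ q) ^ (1 / q)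

/-- The operator norm of a matrix viewed as a map `ℓ_q^b → ℓ_q^a`. -/
noncomputable def opNorm (q : ℝ) {a b : ℕ} (A : Matrix (Fin a) (Fin b) ℂ) : ℝ :=
  sSup {c | ∃ x : Fin b → ℂ, lpNorm q x ≤ 1 ∧ c = lpNorm q (A.mulVec x)}

/-- The entrywise ℓ_q norm of a matrix. -/
noncomputable def eNorm (q : ℝ) {a b : ℕ} (A : Matrix (Fin a) (Fin b) ℂ) : ℝ :=
  (∑ i, ∑ j, ‖A i j‖ ^ q) ^ (1 / q)

variable {V : Type*} [NormedAddCommGroup V] [NormedSpace ℂ V]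

/-- The product `α w β` of scalar matrices `α ∈ M_{n,r}(ℂ)`, `β ∈ M_{r,n}(ℂ)` with a
matrix `w ∈ M_r(V)` over a vector space `V`. -/
def act {n r : ℕ} (α : Matrix (Fin n) (Fin r) ℂ) (w : Matrix (Fin r) (Fin r) V)
    (β : Matrix (Fin r) (Fin n) ℂ) : Matrix (Fin n) (Fin n) V :=
  fun i j => ∑ k, ∑ l, (α i k * β l j) • w k l

/-- The block-diagonal direct sum `v₁ ⊕ v₂ ∈ M_{n+m}(V)`. -/
def blockDiag {n m : ℕ} (v₁ : Matrix (Fin n) (Fin n) V) (v₂ : Matrix (Fin m) (Fin m) V) :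
    Matrix (Fin (n + m)) (Fin (n + m)) V :=
  Matrix.reindex finSumFinEquiv finSumFinEquiv (Matrix.fromBlocks v₁ 0 0 v₂)

/-- An (abstract) p-operator space structure on a complex Banach space `V`: a sequence of
norms on the matrix spaces `M_r(V)` satisfying the axioms `D_∞` and `M_p`. -/
structure POpSpace (p : ℝ) (V : Type*) [NormedAddCommGroup V] [NormedSpace ℂ V] where
  /-- the norm on `M_r(V)` -/
  N : ∀ r : ℕ, Matrix (Fin r) (Fin r) V → ℝ
  nonneg : ∀ r w, 0 ≤ N r w
  add_le : ∀ r u w, N r (u + w) ≤ N r u + N r w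
  eq_zero_iff : ∀ r w, N r w = 0 ↔ w = 0
  smul_eq : ∀ r (c : ℂ) w, N r (c • w) = ‖c‖ * N r w
  Dinf : ∀ (n m : ℕ) (v₁ : Matrix (Fin n) (Fin n) V) (v₂ : Matrix (Fin m) (Fin m) V),
    N (n + m) (blockDiag v₁ v₂) = max (N n v₁) (N m v₂)
  Mp : ∀ (n r : ℕ) (α : Matrix (Fin n) (Fin r) ℂ) (w : Matrix (Fin r) (Fin r) V)
    (β : Matrix (Fin r) (Fin n) ℂ), N n (act α w β) ≤ opNorm p α * N r w * opNorm p β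

/-- The quantity `‖v‖_{1,n}` on `M_n(V)`: the infimum of `‖α‖_{p'} ‖w‖ ‖β‖_p` over all
factorizations `v = α w β`. -/
noncomputable def norm1 {p : ℝ} (p' : ℝ) (S : POpSpace p V) (n : ℕ)
    (v : Matrix (Fin n) (Fin n) V) : ℝ :=
  sInf {c | ∃ (r : ℕ) (α : Matrix (Fin n) (Fin r) ℂ) (w : Matrix (Fin r) (Fin r) V)
      (β : Matrix (Fin r) (Fin n) ℂ),
      v = act α w β ∧ c = eNorm p' α * S.N r w * eNorm p β}

/-- `τ ∈ M_{r,n}(ℂ)` is an isometry `ℓ_p^n → ℓ_p^r`. -/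
def IsLpIsometry (q : ℝ) {r n : ℕ} (τ : Matrix (Fin r) (Fin n) ℂ) : Prop :=
  ∀ x : Fin n → ℂ, lpNorm q (τ.mulVec x) = lpNorm q x

/-- `β ∈ M_{r,n}^{(q)}`: a full-rank, ℓ_q-polar decomposible matrix. -/
def FullRankPolarDecomposible (q : ℝ) {r n : ℕ} (β : Matrix (Fin r) (Fin n) ℂ) : Prop :=
  β.rank = n ∧ ∃ (τ : Matrix (Fin r) (Fin n) ℂ) (β₀ : Matrix (Fin n) (Fin n) ℂ),
    IsLpIsometry q τ ∧ β = τ * β₀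

/-- The quantity `‖v‖_{2,n}` on `M_n(V)`: as `‖·‖_{1,n}` but the infimum is restricted to
factorizations `v = α w β` with `αᵀ ∈ M_{r,n}^{(p')}` and `β ∈ M_{r,n}^{(p)}`. -/
noncomputable def norm2 {p : ℝ} (p' : ℝ) (S : POpSpace p V) (n : ℕ)
    (v : Matrix (Fin n) (Fin n) V) : ℝ :=
  sInf {c | ∃ (r : ℕ) (α : Matrix (Fin n) (Fin r) ℂ) (w : Matrix (Fin r) (Fin r) V)
      (β : Matrix (Fin r) (Fin n) ℂ),
      FullRankPolarDecomposible p' α.transpose ∧ FullRankPolarDecomposible p β ∧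
      v = act α w β ∧ c = eNorm p' α * S.N r w * eNorm p β}


/-! ### Auxiliary lemmas -/

section Aux

lemma rpow_one_div_rpow {q x : ℝ} (hq : q ≠ 0) (hx : 0 ≤ x) : (x ^ (1/q)) ^ q = x := by
  rw [← Real.rpow_mul hx, one_div, inv_mul_cancel₀ hq, Real.rpow_one]

lemma lpSum_nonneg {q : ℝ} {m : ℕ} (x : Fin m → ℂ) : 0 ≤ ∑ i, ‖x i‖ ^ q := by positivity

lemma eSum_nonneg {q : ℝ} {a b : ℕ} (A : Matrix (Fin a) (Fin b) ℂ) :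
    0 ≤ ∑ i, ∑ j, ‖A i j‖ ^ q := by positivity

lemma eNorm_nonneg {q : ℝ} {a b : ℕ} (A : Matrix (Fin a) (Fin b) ℂ) : 0 ≤ eNorm q A :=
  Real.rpow_nonneg (eSum_nonneg A) _

lemma eNorm_rpow {q : ℝ} (hq : q ≠ 0) {a b : ℕ} (A : Matrix (Fin a) (Fin b) ℂ) :
    (eNorm q A) ^ q = ∑ i, ∑ j, ‖A i j‖ ^ q :=
  rpow_one_div_rpow hq (eSum_nonneg A)

lemma eNorm_pos {q : ℝ} (hq : 0 < q) {a b : ℕ} {A : Matrix (Fin a) (Fin b) ℂ} (hA : A ≠ 0) :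
    0 < eNorm q A := by
  apply Real.rpow_pos_of_pos
  have : ∃ i j, A i j ≠ 0 := by
    by_contra h
    push_neg at h
    exact hA (by ext i j; simpa using h i j)
  obtain ⟨i, j, hij⟩ := this
  have h1 : 0 < ‖A i j‖ ^ q := Real.rpow_pos_of_pos (by simpa [norm_pos_iff] using hij) q
  have h2 : 0 < ∑ j', ‖A i j'‖ ^ q :=
    Finset.sum_pos' (fun _ _ => Real.rpow_nonneg (norm_nonneg _) _) ⟨j, Finset.mem_univ _, h1⟩
  exact Finset.sum_pos'
    (fun _ _ => Finset.sum_nonneg fun _ _ => Real.rpow_nonneg (norm_nonneg _) _)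
    ⟨i, Finset.mem_univ _, h2⟩

lemma lpNorm_sum_eq {q : ℝ} (hq : q ≠ 0) {a b : ℕ} {x : Fin a → ℂ} {y : Fin b → ℂ}
    (h : lpNorm q x = lpNorm q y) : ∑ i, ‖x i‖ ^ q = ∑ i, ‖y i‖ ^ q := by
  have h2 := congrArg (· ^ q) h
  simp only [lpNorm] at h2
  rwa [rpow_one_div_rpow hq (lpSum_nonneg x), rpow_one_div_rpow hq (lpSum_nonneg y)] at h2

lemma rank_eq_width_iff {r n : ℕ} (A : Matrix (Fin r) (Fin n) ℂ) :
    A.rank = n ↔ Function.Injective A.mulVecLin := by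
  rw [← LinearMap.ker_eq_bot]
  constructor
  · intro h
    have h2 := LinearMap.finrank_range_add_finrank_ker A.mulVecLin
    rw [show Matrix.rank A = Module.finrank ℂ (LinearMap.range A.mulVecLin) from rfl] at h
    rw [h, Module.finrank_pi] at h2
    simp only [Fintype.card_fin] at h2
    have : Module.finrank ℂ (LinearMap.ker A.mulVecLin) = 0 := by omega
    exact Submodule.finrank_eq_zero.mp this
  · intro h
    have h2 := LinearMap.finrank_range_add_finrank_ker A.mulVecLin
    rw [h, finrank_bot, Module.finrank_pi] at h2
    simpa [Matrix.rank] using h2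

/-- Rectangular block-diagonal sum of complex matrices. -/
def bmat {a b c d : ℕ} (A : Matrix (Fin a) (Fin b) ℂ) (B : Matrix (Fin c) (Fin d) ℂ) :
    Matrix (Fin (a + c)) (Fin (b + d)) ℂ :=
  Matrix.reindex finSumFinEquiv finSumFinEquiv (Matrix.fromBlocks A 0 0 B)

lemma bmat_apply {a b c d : ℕ} (A : Matrix (Fin a) (Fin b) ℂ) (B : Matrix (Fin c) (Fin d) ℂ)
    (i : Fin (a + c)) (j : Fin (b + d)) :
    bmat A B i j = Matrix.fromBlocks A 0 0 B (finSumFinEquiv.symm i) (finSumFinEquiv.symm j) :=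
  rfl

lemma eSum_bmat {q : ℝ} (hq : q ≠ 0) {a b c d : ℕ} (A : Matrix (Fin a) (Fin b) ℂ)
    (B : Matrix (Fin c) (Fin d) ℂ) :
    ∑ i, ∑ j, ‖bmat A B i j‖ ^ q
      = (∑ i, ∑ j, ‖A i j‖ ^ q) + (∑ i, ∑ j, ‖B i j‖ ^ q) := by
  have hin : ∀ s : Fin a ⊕ Fin c, ∑ j, ‖bmat A B (finSumFinEquiv s) j‖ ^ q
      = ∑ t : Fin b ⊕ Fin d, ‖Matrix.fromBlocks A 0 0 B s t‖ ^ q := by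
    intro s
    rw [← Equiv.sum_comp (finSumFinEquiv (m := b) (n := d))]
    simp [bmat_apply]
  rw [← Equiv.sum_comp (finSumFinEquiv (m := a) (n := c))
    (fun i => ∑ j, ‖bmat A B i j‖ ^ q)]
  rw [Finset.sum_congr rfl (fun s _ => hin s)]
  simp [Fintype.sum_sum_type, Matrix.fromBlocks_apply₁₂, Matrix.fromBlocks_apply₂₁,
    Real.zero_rpow hq]

lemma bmat_mulVec {a b c d : ℕ} (A : Matrix (Fin a) (Fin b) ℂ) (B : Matrix (Fin c) (Fin d) ℂ)
    (x : Fin (b + d) → ℂ) :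
    (bmat A B).mulVec x
      = ((Matrix.fromBlocks A 0 0 B).mulVec (x ∘ finSumFinEquiv)) ∘ finSumFinEquiv.symm := by
  have : bmat A B = (Matrix.fromBlocks A 0 0 B).submatrix finSumFinEquiv.symm
      (finSumFinEquiv (m := b) (n := d)).symm := rfl
  rw [this, Matrix.submatrix_mulVec_equiv]
  simp [Function.comp]

lemma isLpIsometry_bmat {q : ℝ} (hq : q ≠ 0) {r₁ n r₂ m : ℕ}
    {τ₁ : Matrix (Fin r₁) (Fin n) ℂ} {τ₂ : Matrix (Fin r₂) (Fin m) ℂ}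
    (h₁ : IsLpIsometry q τ₁) (h₂ : IsLpIsometry q τ₂) :
    IsLpIsometry q (bmat τ₁ τ₂) := by
  intro x
  unfold lpNorm
  congr 1
  rw [bmat_mulVec]
  rw [← Equiv.sum_comp (finSumFinEquiv (m := r₁) (n := r₂))
    (fun i => ‖(((Matrix.fromBlocks τ₁ 0 0 τ₂).mulVec (x ∘ finSumFinEquiv)) ∘ finSumFinEquiv.symm) i‖ ^ q)]
  simp only [Function.comp_apply, Equiv.symm_apply_apply]
  rw [Matrix.fromBlocks_mulVec]
  simp only [Matrix.zero_mulVec, add_zero, zero_add]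
  rw [Fintype.sum_sum_type]
  simp only [Sum.elim_inl, Sum.elim_inr]
  rw [lpNorm_sum_eq hq (h₁ ((x ∘ finSumFinEquiv) ∘ Sum.inl)),
    lpNorm_sum_eq hq (h₂ ((x ∘ finSumFinEquiv) ∘ Sum.inr))]
  simp only [Function.comp_apply]
  rw [← Fintype.sum_sum_type (fun s : Fin n ⊕ Fin m => ‖x (finSumFinEquiv s)‖ ^ q)]
  exact Equiv.sum_comp finSumFinEquiv (fun i => ‖x i‖ ^ q)

lemma rank_bmat {a n c m : ℕ} {A : Matrix (Fin a) (Fin n) ℂ} {B : Matrix (Fin c) (Fin m) ℂ}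
    (hA : A.rank = n) (hB : B.rank = m) : (bmat A B).rank = n + m := by
  rw [rank_eq_width_iff] at hA hB ⊢
  rw [injective_iff_map_eq_zero]
  intro x hx
  simp only [Matrix.mulVecLin_apply] at hx
  rw [bmat_mulVec] at hx
  have hx2 : (Matrix.fromBlocks A 0 0 B).mulVec (x ∘ finSumFinEquiv) = 0 := by
    funext s
    have := congrFun hx (finSumFinEquiv s)
    simpa using this
  rw [Matrix.fromBlocks_mulVec] at hx2
  simp only [Matrix.zero_mulVec, add_zero, zero_add] at hx2
  have h1 : A.mulVec ((x ∘ finSumFinEquiv) ∘ Sum.inl) = 0 := by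
    funext i; exact congrFun hx2 (Sum.inl i)
  have h2 : B.mulVec ((x ∘ finSumFinEquiv) ∘ Sum.inr) = 0 := by
    funext i; exact congrFun hx2 (Sum.inr i)
  have e1 : ((x ∘ finSumFinEquiv) ∘ Sum.inl) = 0 := by
    apply hA
    simpa [Matrix.mulVecLin_apply] using h1
  have e2 : ((x ∘ finSumFinEquiv) ∘ Sum.inr) = 0 := by
    apply hB
    simpa [Matrix.mulVecLin_apply] using h2
  funext i
  rcases hs : finSumFinEquiv.symm i with s | s
  · have : i = finSumFinEquiv (Sum.inl s) := by
      rw [← hs, Equiv.apply_symm_apply]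
    rw [this]
    exact congrFun e1 s
  · have : i = finSumFinEquiv (Sum.inr s) := by
      rw [← hs, Equiv.apply_symm_apply]
    rw [this]
    exact congrFun e2 s

lemma bmat_mul {a b c d e f : ℕ} (A : Matrix (Fin a) (Fin b) ℂ) (B : Matrix (Fin c) (Fin d) ℂ)
    (C : Matrix (Fin b) (Fin e) ℂ) (D : Matrix (Fin d) (Fin f) ℂ) :
    bmat A B * bmat C D = bmat (A * C) (B * D) := by
  have h1 : bmat A B = (Matrix.fromBlocks A 0 0 B).submatrix finSumFinEquiv.symm
      (finSumFinEquiv (m := b) (n := d)).symm := rfl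
  have h2 : bmat C D = (Matrix.fromBlocks C 0 0 D).submatrix
      (finSumFinEquiv (m := b) (n := d)).symm finSumFinEquiv.symm := rfl
  rw [h1, h2, Matrix.submatrix_mul_equiv, Matrix.fromBlocks_multiply]
  simp [bmat, Matrix.reindex_apply]

lemma bmat_transpose {a b c d : ℕ} (A : Matrix (Fin a) (Fin b) ℂ) (B : Matrix (Fin c) (Fin d) ℂ) :
    (bmat A B)ᵀ = bmat Aᵀ Bᵀ := by
  have h1 : bmat A B = (Matrix.fromBlocks A 0 0 B).submatrix finSumFinEquiv.symm
      (finSumFinEquiv (m := b) (n := d)).symm := rfl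
  rw [h1, Matrix.transpose_submatrix, Matrix.fromBlocks_transpose]
  simp [bmat, Matrix.reindex_apply]

lemma FRPD_bmat {q : ℝ} (hq : q ≠ 0) {r₁ n r₂ m : ℕ}
    {β₁ : Matrix (Fin r₁) (Fin n) ℂ} {β₂ : Matrix (Fin r₂) (Fin m) ℂ}
    (h₁ : FullRankPolarDecomposible q β₁) (h₂ : FullRankPolarDecomposible q β₂) :
    FullRankPolarDecomposible q (bmat β₁ β₂) := by
  obtain ⟨hr₁, τ₁, β₀₁, hτ₁, he₁⟩ := h₁
  obtain ⟨hr₂, τ₂, β₀₂, hτ₂, he₂⟩ := h₂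
  refine ⟨rank_bmat hr₁ hr₂, bmat τ₁ τ₂, bmat β₀₁ β₀₂, isLpIsometry_bmat hq hτ₁ hτ₂, ?_⟩
  rw [bmat_mul, ← he₁, ← he₂]

lemma act_bmat {n r₁ m r₂ : ℕ} (α₁ : Matrix (Fin n) (Fin r₁) ℂ) (w₁ : Matrix (Fin r₁) (Fin r₁) V)
    (β₁ : Matrix (Fin r₁) (Fin n) ℂ) (α₂ : Matrix (Fin m) (Fin r₂) ℂ)
    (w₂ : Matrix (Fin r₂) (Fin r₂) V) (β₂ : Matrix (Fin r₂) (Fin m) ℂ) :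
    act (bmat α₁ α₂) (blockDiag w₁ w₂) (bmat β₁ β₂)
      = blockDiag (act α₁ w₁ β₁) (act α₂ w₂ β₂) := by
  funext i j
  show ∑ k, ∑ l, _ • _ = _
  have hin : ∀ k : Fin (r₁ + r₂),
      ∑ l, (bmat α₁ α₂ i k * bmat β₁ β₂ l j) • blockDiag w₁ w₂ k l
        = ∑ t : Fin r₁ ⊕ Fin r₂,
            (bmat α₁ α₂ i k * bmat β₁ β₂ (finSumFinEquiv t) j) •
              blockDiag w₁ w₂ k (finSumFinEquiv t) := by
    intro k
    exact (Equiv.sum_comp finSumFinEquiv _).symm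
  rw [Finset.sum_congr rfl (fun k _ => hin k),
    ← Equiv.sum_comp (finSumFinEquiv (m := r₁) (n := r₂))]
  have key : ∀ s t, (bmat α₁ α₂ i (finSumFinEquiv s) * bmat β₁ β₂ (finSumFinEquiv t) j) •
        blockDiag w₁ w₂ (finSumFinEquiv s) (finSumFinEquiv t)
      = (Matrix.fromBlocks α₁ 0 0 α₂ (finSumFinEquiv.symm i) s *
          Matrix.fromBlocks β₁ 0 0 β₂ t (finSumFinEquiv.symm j)) •
          Matrix.fromBlocks w₁ 0 0 w₂ s t := by
    intro s t
    simp [bmat_apply, _root_.blockDiag, Matrix.reindex_apply, Matrix.submatrix_apply]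
  rw [Finset.sum_congr rfl (fun s _ => Finset.sum_congr rfl (fun t _ => key s t))]
  show _ = Matrix.fromBlocks (act α₁ w₁ β₁) 0 0 (act α₂ w₂ β₂)
      (finSumFinEquiv.symm i) (finSumFinEquiv.symm j)
  rcases hsi : finSumFinEquiv.symm i with i' | i' <;>
    rcases hsj : finSumFinEquiv.symm j with j' | j' <;>
      simp [Fintype.sum_sum_type, act]

lemma act_smul {n r : ℕ} (t s : ℂ) (α : Matrix (Fin n) (Fin r) ℂ) (w : Matrix (Fin r) (Fin r) V)
    (β : Matrix (Fin r) (Fin n) ℂ) :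
    act (t • α) w (s • β) = act α ((t * s) • w) β := by
  funext i j
  show ∑ k, ∑ l, _ = ∑ k, ∑ l, _
  refine Finset.sum_congr rfl fun k _ => Finset.sum_congr rfl fun l _ => ?_
  simp only [Matrix.smul_apply, smul_eq_mul, smul_smul]
  ring_nf

lemma eNorm_smul {q : ℝ} (hq : 0 < q) {a b : ℕ} (t : ℝ) (ht : 0 ≤ t)
    (A : Matrix (Fin a) (Fin b) ℂ) : eNorm q ((t : ℂ) • A) = t * eNorm q A := by
  unfold eNorm
  have h1 : ∀ i j, ‖((t : ℂ) • A) i j‖ ^ q = t ^ q * ‖A i j‖ ^ q := by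
    intro i j
    rw [Matrix.smul_apply, norm_smul, Complex.norm_real, Real.norm_eq_abs, abs_of_nonneg ht,
      Real.mul_rpow ht (norm_nonneg _)]
  simp only [h1, ← Finset.mul_sum]
  rw [Real.mul_rpow (Real.rpow_nonneg ht _) (eSum_nonneg A), ← Real.rpow_mul ht,
    mul_one_div_cancel hq.ne', Real.rpow_one]

lemma FRPD_smul {q : ℝ} {r n : ℕ} {β : Matrix (Fin r) (Fin n) ℂ}
    (h : FullRankPolarDecomposible q β) {t : ℂ} (ht : t ≠ 0) :
    FullRankPolarDecomposible q (t • β) := by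
  obtain ⟨hr, τ, β₀, hτ, he⟩ := h
  have hr' := (rank_eq_width_iff β).mp hr
  refine ⟨(rank_eq_width_iff _).mpr ?_, τ, t • β₀, hτ, by rw [Matrix.mul_smul, ← he]⟩
  intro x y hxy
  apply hr'
  simp only [Matrix.mulVecLin_apply, Matrix.smul_mulVec] at hxy ⊢
  exact smul_right_injective _ ht hxy

lemma act_one_one {n : ℕ} (v : Matrix (Fin n) (Fin n) V) : act 1 v 1 = v := by
  funext i j
  show ∑ k, ∑ l, ((1 : Matrix (Fin n) (Fin n) ℂ) i k * (1 : Matrix (Fin n) (Fin n) ℂ) l j) • v k l = v i j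
  simp [Matrix.one_apply, ite_smul, Finset.sum_ite_eq, Finset.sum_ite_eq']

lemma FRPD_one {q : ℝ} {n : ℕ} : FullRankPolarDecomposible q (1 : Matrix (Fin n) (Fin n) ℂ) :=
  ⟨by simp [Matrix.rank_one], 1, 1, fun x => by rw [Matrix.one_mulVec], (one_mul _).symm⟩

lemma eNorm_bmat {q : ℝ} (hq : 0 < q) {a b c d : ℕ} (A : Matrix (Fin a) (Fin b) ℂ)
    (B : Matrix (Fin c) (Fin d) ℂ) :
    eNorm q (bmat A B) = (eNorm q A ^ q + eNorm q B ^ q) ^ (1/q) := by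
  unfold eNorm
  rw [eSum_bmat hq.ne']
  congr 1
  rw [rpow_one_div_rpow hq.ne' (eSum_nonneg A), rpow_one_div_rpow hq.ne' (eSum_nonneg B)]

lemma rpow_rpow_one_div {q x : ℝ} (hq : q ≠ 0) (hx : 0 ≤ x) : (x ^ q) ^ (1/q) = x := by
  rw [← Real.rpow_mul hx, mul_one_div, div_self hq, Real.rpow_one]

lemma FRPD_zero_dim {q : ℝ} : FullRankPolarDecomposible q (0 : Matrix (Fin 0) (Fin 0) ℂ) := by
  refine ⟨by simp, 0, 0, fun x => by unfold lpNorm; simp, by simp⟩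

/-- the defining set of `norm2`. -/
def N2Set {p : ℝ} (p' : ℝ) (S : POpSpace p V) (n : ℕ) (v : Matrix (Fin n) (Fin n) V) : Set ℝ :=
  {c | ∃ (r : ℕ) (α : Matrix (Fin n) (Fin r) ℂ) (w : Matrix (Fin r) (Fin r) V)
      (β : Matrix (Fin r) (Fin n) ℂ),
      FullRankPolarDecomposible p' α.transpose ∧ FullRankPolarDecomposible p β ∧
      v = act α w β ∧ c = eNorm p' α * S.N r w * eNorm p β}

lemma norm2_eq_sInf {p : ℝ} (p' : ℝ) (S : POpSpace p V) (n : ℕ)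
    (v : Matrix (Fin n) (Fin n) V) : norm2 p' S n v = sInf (N2Set p' S n v) := rfl

lemma N2Set_nonneg {p p' : ℝ} {S : POpSpace p V} {n : ℕ} {v : Matrix (Fin n) (Fin n) V}
    {c : ℝ} (hc : c ∈ N2Set p' S n v) : 0 ≤ c := by
  obtain ⟨r, α, w, β, -, -, -, rfl⟩ := hc
  exact mul_nonneg (mul_nonneg (eNorm_nonneg _) (S.nonneg _ _)) (eNorm_nonneg _)

lemma N2Set_nonempty {p p' : ℝ} (S : POpSpace p V) (n : ℕ) (v : Matrix (Fin n) (Fin n) V) :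
    (N2Set p' S n v).Nonempty :=
  ⟨_, n, 1, v, 1, by rw [Matrix.transpose_one]; exact FRPD_one, FRPD_one,
    (act_one_one v).symm, rfl⟩

lemma N2Set_bddBelow {p p' : ℝ} (S : POpSpace p V) (n : ℕ) (v : Matrix (Fin n) (Fin n) V) :
    BddBelow (N2Set p' S n v) := ⟨0, fun _ hc => N2Set_nonneg hc⟩

lemma norm2_nonneg {p p' : ℝ} (S : POpSpace p V) (n : ℕ) (v : Matrix (Fin n) (Fin n) V) :
    0 ≤ norm2 p' S n v :=
  Real.sInf_nonneg fun _ hc => N2Set_nonneg hc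

lemma mem_combine {p p' : ℝ} (hp : 0 < p) (hp' : 0 < p') (S : POpSpace p V) {n m r₁ r₂ : ℕ}
    {v₁ : Matrix (Fin n) (Fin n) V} {v₂ : Matrix (Fin m) (Fin m) V}
    {α₁ : Matrix (Fin n) (Fin r₁) ℂ} {w₁ : Matrix (Fin r₁) (Fin r₁) V}
    {β₁ : Matrix (Fin r₁) (Fin n) ℂ}
    {α₂ : Matrix (Fin m) (Fin r₂) ℂ} {w₂ : Matrix (Fin r₂) (Fin r₂) V}
    {β₂ : Matrix (Fin r₂) (Fin m) ℂ}
    (h₁a : FullRankPolarDecomposible p' α₁.transpose) (h₁b : FullRankPolarDecomposible p β₁)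
    (h₁v : v₁ = act α₁ w₁ β₁)
    (h₂a : FullRankPolarDecomposible p' α₂.transpose) (h₂b : FullRankPolarDecomposible p β₂)
    (h₂v : v₂ = act α₂ w₂ β₂) :
    (eNorm p' α₁ ^ p' + eNorm p' α₂ ^ p') ^ (1/p') * max (S.N r₁ w₁) (S.N r₂ w₂) *
      (eNorm p β₁ ^ p + eNorm p β₂ ^ p) ^ (1/p) ∈ N2Set p' S (n + m) (blockDiag v₁ v₂) := by
  refine ⟨r₁ + r₂, bmat α₁ α₂, blockDiag w₁ w₂, bmat β₁ β₂, ?_, ?_, ?_, ?_⟩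
  · rw [bmat_transpose]
    exact FRPD_bmat hp'.ne' h₁a h₂a
  · exact FRPD_bmat hp.ne' h₁b h₂b
  · rw [act_bmat, ← h₁v, ← h₂v]
  · rw [S.Dinf, eNorm_bmat hp', eNorm_bmat hp]

lemma eNorm_zero_dim {q : ℝ} (hq : q ≠ 0) : eNorm q (0 : Matrix (Fin 0) (Fin 0) ℂ) = 0 := by
  unfold eNorm
  rw [show (∑ i : Fin 0, ∑ j : Fin 0, ‖(0 : Matrix (Fin 0) (Fin 0) ℂ) i j‖ ^ q) = 0 by simp]
  exact Real.zero_rpow (one_div_ne_zero hq)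

end Aux

/-- Remark 4.7: `‖v₁ ⊕ v₂‖_{2,n+m} ≤ ‖v₁‖_{2,n} + ‖v₂‖_{2,m}`. -/
theorem norm2_blockDiag (p p' : ℝ) (hp : 1 < p) (hp' : 1 < p')
    (hconj : 1 / p + 1 / p' = 1) (S : POpSpace p V) (n m : ℕ)
    (v₁ : Matrix (Fin n) (Fin n) V) (v₂ : Matrix (Fin m) (Fin m) V) :
    norm2 p' S (n + m) (blockDiag v₁ v₂) ≤ norm2 p' S n v₁ + norm2 p' S m v₂ := by
  have hp0 : 0 < p := lt_trans one_pos hp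
  have hp'0 : 0 < p' := lt_trans one_pos hp'
  refine le_of_forall_pos_le_add fun ε hε => ?_
  have hδ : 0 < ε / 4 := by positivity
  obtain ⟨c₁, hc₁mem, hc₁lt⟩ := Real.lt_sInf_add_pos (N2Set_nonempty (p' := p') S n v₁) hδ
  obtain ⟨c₂, hc₂mem, hc₂lt⟩ := Real.lt_sInf_add_pos (N2Set_nonempty (p' := p') S m v₂) hδ
  rw [← norm2_eq_sInf] at hc₁lt hc₂lt
  have hc₁0 : 0 ≤ c₁ := N2Set_nonneg hc₁mem
  have hc₂0 : 0 ≤ c₂ := N2Set_nonneg hc₂mem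
  suffices h : ∃ c ∈ N2Set p' S (n + m) (blockDiag v₁ v₂), c ≤ c₁ + c₂ + 2 * (ε / 4) by
    obtain ⟨c, hcmem, hcle⟩ := h
    have h1 : norm2 p' S (n + m) (blockDiag v₁ v₂) ≤ c := by
      rw [norm2_eq_sInf]
      exact csInf_le (N2Set_bddBelow S _ _) hcmem
    linarith
  obtain ⟨r₁, α₁, w₁, β₁, h₁a, h₁b, h₁v, hc₁⟩ := hc₁mem
  obtain ⟨r₂, α₂, w₂, β₂, h₂a, h₂b, h₂v, hc₂⟩ := hc₂mem
  rcases Nat.eq_zero_or_pos n with rfl | hn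
  · -- n = 0 : use the trivial factorization on the left
    have hz : FullRankPolarDecomposible p' ((0 : Matrix (Fin 0) (Fin 0) ℂ)).transpose := by
      rw [Matrix.transpose_zero]; exact FRPD_zero_dim
    have hv₁z : v₁ = act (0 : Matrix (Fin 0) (Fin 0) ℂ) (0 : Matrix (Fin 0) (Fin 0) V) 0 := by
      funext i j; exact i.elim0
    refine ⟨_, mem_combine hp0 hp'0 S hz FRPD_zero_dim hv₁z h₂a h₂b h₂v, ?_⟩
    rw [eNorm_zero_dim hp'0.ne', eNorm_zero_dim hp0.ne',
      Real.zero_rpow hp'0.ne', Real.zero_rpow hp0.ne', zero_add, zero_add,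
      rpow_rpow_one_div hp'0.ne' (eNorm_nonneg _), rpow_rpow_one_div hp0.ne' (eNorm_nonneg _),
      show S.N 0 (0 : Matrix (Fin 0) (Fin 0) V) = 0 from (S.eq_zero_iff 0 0).mpr rfl,
      max_eq_right (S.nonneg r₂ w₂)]
    rw [← hc₂]
    linarith
  rcases Nat.eq_zero_or_pos m with rfl | hm
  · -- m = 0 : use the trivial factorization on the right
    have hz : FullRankPolarDecomposible p' ((0 : Matrix (Fin 0) (Fin 0) ℂ)).transpose := by
      rw [Matrix.transpose_zero]; exact FRPD_zero_dim
    have hv₂z : v₂ = act (0 : Matrix (Fin 0) (Fin 0) ℂ) (0 : Matrix (Fin 0) (Fin 0) V) 0 := by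
      funext i j; exact i.elim0
    refine ⟨_, mem_combine hp0 hp'0 S h₁a h₁b h₁v hz FRPD_zero_dim hv₂z, ?_⟩
    rw [eNorm_zero_dim hp'0.ne', eNorm_zero_dim hp0.ne',
      Real.zero_rpow hp'0.ne', Real.zero_rpow hp0.ne', add_zero, add_zero,
      rpow_rpow_one_div hp'0.ne' (eNorm_nonneg _), rpow_rpow_one_div hp0.ne' (eNorm_nonneg _),
      show S.N 0 (0 : Matrix (Fin 0) (Fin 0) V) = 0 from (S.eq_zero_iff 0 0).mpr rfl,
      max_eq_left (S.nonneg r₁ w₁)]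
    rw [← hc₁]
    linarith
  -- main case : n ≥ 1 and m ≥ 1, rescale both factorizations
  have hα₁ : α₁ ≠ 0 := by
    intro h
    have := h₁a.1
    rw [h, Matrix.transpose_zero, Matrix.rank_zero] at this
    omega
  have hβ₁ : β₁ ≠ 0 := by
    intro h
    have := h₁b.1
    rw [h, Matrix.rank_zero] at this
    omega
  have hα₂ : α₂ ≠ 0 := by
    intro h
    have := h₂a.1
    rw [h, Matrix.transpose_zero, Matrix.rank_zero] at this
    omega
  have hβ₂ : β₂ ≠ 0 := by
    intro h
    have := h₂b.1
    rw [h, Matrix.rank_zero] at this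
    omega
  have hA₁ : 0 < eNorm p' α₁ := eNorm_pos hp'0 hα₁
  have hB₁ : 0 < eNorm p β₁ := eNorm_pos hp0 hβ₁
  have hA₂ : 0 < eNorm p' α₂ := eNorm_pos hp'0 hα₂
  have hB₂ : 0 < eNorm p β₂ := eNorm_pos hp0 hβ₂
  have hsum1 : 1 / p' + 1 / p = 1 := by linarith
  obtain ⟨c, hcmem, hceq⟩ : ∃ c ∈ N2Set p' S (n + m) (blockDiag v₁ v₂),
      c = ((c₁ + ε/4) + (c₂ + ε/4)) ^ (1/p') *
        max ((c₁ + ε/4)⁻¹ * c₁) ((c₂ + ε/4)⁻¹ * c₂) *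
        ((c₁ + ε/4) + (c₂ + ε/4)) ^ (1/p) := by
    have hd₁ : 0 < c₁ + ε/4 := by linarith
    have hd₂ : 0 < c₂ + ε/4 := by linarith
    have key : ∀ (k : ℕ) (r : ℕ) (α : Matrix (Fin k) (Fin r) ℂ) (w : Matrix (Fin r) (Fin r) V)
        (β : Matrix (Fin r) (Fin k) ℂ) (v : Matrix (Fin k) (Fin k) V) (d : ℝ), 0 < d →
        0 < eNorm p' α → 0 < eNorm p β →
        FullRankPolarDecomposible p' α.transpose → FullRankPolarDecomposible p β →
        v = act α w β →
        ∃ (α' : Matrix (Fin k) (Fin r) ℂ) (w' : Matrix (Fin r) (Fin r) V)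
          (β' : Matrix (Fin r) (Fin k) ℂ),
          FullRankPolarDecomposible p' α'.transpose ∧ FullRankPolarDecomposible p β' ∧
          v = act α' w' β' ∧ eNorm p' α' = d ^ (1/p') ∧ eNorm p β' = d ^ (1/p) ∧
          S.N r w' = d⁻¹ * (eNorm p' α * S.N r w * eNorm p β) := by
      intro k r α w β v d hd hA hB ha hb hv
      set t : ℝ := d ^ (1/p') / eNorm p' α with htdef
      set s : ℝ := d ^ (1/p) / eNorm p β with hsdef
      have ht : 0 < t := div_pos (Real.rpow_pos_of_pos hd _) hA
      have hs : 0 < s := div_pos (Real.rpow_pos_of_pos hd _) hB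
      have hts : t * s = d / (eNorm p' α * eNorm p β) := by
        rw [htdef, hsdef, div_mul_div_comm, ← Real.rpow_add hd, hsum1, Real.rpow_one]
      refine ⟨((t : ℂ)) • α, (((t * s)⁻¹ : ℝ) : ℂ) • w, ((s : ℂ)) • β, ?_, ?_, ?_, ?_, ?_, ?_⟩
      · rw [Matrix.transpose_smul]
        exact FRPD_smul ha (by exact_mod_cast ht.ne')
      · exact FRPD_smul hb (by exact_mod_cast hs.ne')
      · rw [act_smul, smul_smul, ← Complex.ofReal_mul, ← Complex.ofReal_mul,
          mul_inv_cancel₀ (by positivity : t * s ≠ 0), Complex.ofReal_one, one_smul]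
        exact hv
      · rw [eNorm_smul hp'0 t ht.le, htdef, div_mul_cancel₀ _ hA.ne']
      · rw [eNorm_smul hp0 s hs.le, hsdef, div_mul_cancel₀ _ hB.ne']
      · rw [S.smul_eq, Complex.norm_real, Real.norm_eq_abs,
          abs_of_nonneg (by positivity : (0:ℝ) ≤ (t*s)⁻¹), hts, inv_div]
        field_simp
    obtain ⟨α₁', w₁', β₁', h₁a', h₁b', h₁v', hA₁', hB₁', hW₁'⟩ :=
      key n r₁ α₁ w₁ β₁ v₁ (c₁ + ε/4) hd₁ hA₁ hB₁ h₁a h₁b h₁v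
    obtain ⟨α₂', w₂', β₂', h₂a', h₂b', h₂v', hA₂', hB₂', hW₂'⟩ :=
      key m r₂ α₂ w₂ β₂ v₂ (c₂ + ε/4) hd₂ hA₂ hB₂ h₂a h₂b h₂v
    refine ⟨_, mem_combine hp0 hp'0 S h₁a' h₁b' h₁v' h₂a' h₂b' h₂v', ?_⟩
    rw [hA₁', hA₂', hB₁', hB₂', hW₁', hW₂', ← hc₁, ← hc₂,
      rpow_one_div_rpow hp'0.ne' hd₁.le, rpow_one_div_rpow hp'0.ne' hd₂.le,
      rpow_one_div_rpow hp0.ne' hd₁.le, rpow_one_div_rpow hp0.ne' hd₂.le]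
  refine ⟨c, hcmem, ?_⟩
  rw [hceq]
  have hd₁ : 0 < c₁ + ε/4 := by linarith
  have hd₂ : 0 < c₂ + ε/4 := by linarith
  have hD : 0 < (c₁ + ε/4) + (c₂ + ε/4) := by linarith
  have hmax : max ((c₁ + ε/4)⁻¹ * c₁) ((c₂ + ε/4)⁻¹ * c₂) ≤ 1 := by
    apply max_le
    · rw [inv_mul_le_iff₀ hd₁, mul_one]; linarith
    · rw [inv_mul_le_iff₀ hd₂, mul_one]; linarith
  have hX : (0:ℝ) ≤ ((c₁ + ε/4) + (c₂ + ε/4)) ^ (1/p') := Real.rpow_nonneg hD.le _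
  have hY : (0:ℝ) ≤ ((c₁ + ε/4) + (c₂ + ε/4)) ^ (1/p) := Real.rpow_nonneg hD.le _
  have hle : ((c₁ + ε/4) + (c₂ + ε/4)) ^ (1/p') *
      max ((c₁ + ε/4)⁻¹ * c₁) ((c₂ + ε/4)⁻¹ * c₂) *
      ((c₁ + ε/4) + (c₂ + ε/4)) ^ (1/p)
      ≤ ((c₁ + ε/4) + (c₂ + ε/4)) ^ (1/p') * 1 * ((c₁ + ε/4) + (c₂ + ε/4)) ^ (1/p) :=
    mul_le_mul_of_nonneg_right (mul_le_mul_of_nonneg_left hmax hX) hY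
  rw [mul_one, ← Real.rpow_add hD, hsum1, Real.rpow_one] at hle
  linarith
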